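/- Let V be a linear subspace of ℝ^D, let y ∈ ℝ^D, let P ⊆ V + y be a nonempty polytope, let F be a nonempty face of P, and let L be the linear subspace of directions of the affine span of F. Then the linear span of the normal cone ncone_V(F,P) equals the orthogonal complement of L inside V; in particular, the dimension of ncone_V(F,P) (i.e., of its linear span) equals dim V − dim F. -/

import Mathlib

open scoped RealInnerProductSpace

/-- A polytope: convex hull of a nonempty finite set of points. -/
def IsPolytope {D : ℕ} (P : Set (EuclideanSpace ℝ (Fin D))) : Prop :=
  ∃ V : Finset (EuclideanSpace ℝ (Fin D)), V.Nonempty ∧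
    P = convexHull ℝ (V : Set (EuclideanSpace ℝ (Fin D)))

/-- `F` is a (nonempty, exposed) face of `P`: the set of maximizers over `P` of some
linear functional. -/
def IsFaceOf {D : ℕ} (F P : Set (EuclideanSpace ℝ (Fin D))) : Prop :=
  F.Nonempty ∧ ∃ c : EuclideanSpace ℝ (Fin D), F = {x ∈ P | ∀ y ∈ P, ⟪c, y⟫ ≤ ⟪c, x⟫}

/-- The normal cone of `P` at `F` with respect to `V`:
`{u ∈ V : ⟨u,p⟩ ≥ ⟨u,q⟩ for all p ∈ F, q ∈ P}`. -/
def nconeV {D : ℕ} (V : Submodule ℝ (EuclideanSpace ℝ (Fin D)))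
    (F P : Set (EuclideanSpace ℝ (Fin D))) : Set (EuclideanSpace ℝ (Fin D)) :=
  {u | u ∈ V ∧ ∀ p ∈ F, ∀ q ∈ P, ⟪u, q⟫ ≤ ⟪u, p⟫}

/-!
A face `F` of `P ⊆ y + V` is cut out by some `c`, and projecting `c` onto `V` does not change
the maximizers, so we may take `c ∈ V`; then `c` lies in the normal cone. Every element of the
normal cone is constant on `F`, which gives `span ⊆ Lᗮ ⊓ V`. Conversely, for `w ∈ Lᗮ ⊓ V`, the
vector `c + ε • w` still attains its maximum over the vertices of `P` on `F` when `ε > 0` is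
small, since `c` is strictly smaller at the finitely many vertices outside `F`. Hence
`c + ε • w` lies in the normal cone and `w = ε⁻¹ • ((c + ε • w) - c)` lies in its span.
-/

open Filter Topology

lemma vectorSpan_le_of_forall_sub_mem {k M : Type*} [Ring k] [AddCommGroup M] [Module k M]
    {V : Submodule k M} {F : Set M} {y : M} (h : ∀ x ∈ F, x - y ∈ V) : vectorSpan k F ≤ V := by
  rw [vectorSpan_def, Submodule.span_le, Set.vsub_subset_iff]
  intro p hp q hq
  simpa using sub_mem (h p hp) (h q hq)

section InnerProductSpace

variable {E : Type*} [NormedAddCommGroup E] [InnerProductSpace ℝ E]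

lemma mem_orthogonal_vectorSpan_iff {u : E} {F : Set E} :
    u ∈ (vectorSpan ℝ F)ᗮ ↔ ∀ p ∈ F, ∀ q ∈ F, ⟪u, p⟫ = ⟪u, q⟫ := by
  have : u ∈ (vectorSpan ℝ F)ᗮ ↔ vectorSpan ℝ F ≤ LinearMap.ker (innerₛₗ ℝ u) :=
    Submodule.mem_orthogonal' _ _
  rw [this, vectorSpan_def, Submodule.span_le, Set.vsub_subset_iff]
  simp [inner_sub_right, sub_eq_zero]

lemma setOf_forall_inner_le_congr {c c' : E} {P : Set E}
    (h : ∀ x ∈ P, ∀ q ∈ P, ⟪c, x - q⟫ = ⟪c', x - q⟫) :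
    {x ∈ P | ∀ q ∈ P, ⟪c, q⟫ ≤ ⟪c, x⟫} = {x ∈ P | ∀ q ∈ P, ⟪c', q⟫ ≤ ⟪c', x⟫} := by
  ext x
  refine and_congr_right fun hx => forall₂_congr fun q hq => ?_
  have := h x hx q hq
  rw [inner_sub_right, inner_sub_right] at this
  constructor <;> intro <;> linarith

lemma exists_mem_setOf_forall_inner_le_eq {V : Submodule ℝ E} [V.HasOrthogonalProjection]
    {P : Set E} {y : E} (hPV : ∀ x ∈ P, x - y ∈ V) (c : E) :
    ∃ c' ∈ V, {x ∈ P | ∀ q ∈ P, ⟪c', q⟫ ≤ ⟪c', x⟫} = {x ∈ P | ∀ q ∈ P, ⟪c, q⟫ ≤ ⟪c, x⟫} := by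
  refine ⟨V.starProjection c, V.starProjection_apply_mem c,
    setOf_forall_inner_le_congr fun x hx q hq => ?_⟩
  have hxq : x - q ∈ V := by simpa using sub_mem (hPV x hx) (hPV q hq)
  rw [Submodule.inner_starProjection_left_eq_right, V.starProjection_eq_self_iff.2 hxq]

lemma forall_mem_convexHull_inner_le {S : Set E} {u : E} {t : ℝ} (h : ∀ s ∈ S, ⟪u, s⟫ ≤ t) :
    ∀ q ∈ convexHull ℝ S, ⟪u, q⟫ ≤ t :=
  convexHull_min h (convex_halfSpace_le (innerₛₗ ℝ u).isLinear t)

lemma eventually_inner_add_smul_le {c w p s : E} (hs : ⟪c, s⟫ ≤ ⟪c, p⟫)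
    (hw : ⟪c, s⟫ = ⟪c, p⟫ → ⟪w, s⟫ = ⟪w, p⟫) :
    ∀ᶠ ε : ℝ in 𝓝 0, ⟪c + ε • w, s⟫ ≤ ⟪c + ε • w, p⟫ := by
  simp only [inner_add_left, real_inner_smul_left]
  rcases hs.lt_or_eq with hlt | heq
  · refine (ContinuousAt.eventually_lt ?_ ?_ (by simpa using hlt)).mono fun _ => le_of_lt
    all_goals fun_prop
  · exact Eventually.of_forall fun ε => by rw [heq, hw heq]

lemma exists_pos_forall_mem_convexHull_inner_add_smul_le {S : Finset E} {c w p : E}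
    (hp : ∀ s ∈ S, ⟪c, s⟫ ≤ ⟪c, p⟫) (hw : ∀ s ∈ S, ⟪c, s⟫ = ⟪c, p⟫ → ⟪w, s⟫ = ⟪w, p⟫) :
    ∃ ε : ℝ, 0 < ε ∧ ∀ q ∈ convexHull ℝ (S : Set E), ⟪c + ε • w, q⟫ ≤ ⟪c + ε • w, p⟫ := by
  have hS : ∀ᶠ ε : ℝ in 𝓝[>] 0, ∀ s ∈ S, ⟪c + ε • w, s⟫ ≤ ⟪c + ε • w, p⟫ :=
    nhdsWithin_le_nhds <| (eventually_all_finset S).2 fun s hs =>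
      eventually_inner_add_smul_le (hp s hs) (hw s hs)
  obtain ⟨ε, hS, hε⟩ := (hS.and self_mem_nhdsWithin).exists
  exact ⟨ε, hε, forall_mem_convexHull_inner_le hS⟩

end InnerProductSpace

section NormalCone

variable {D : ℕ} {V : Submodule ℝ (EuclideanSpace ℝ (Fin D))}
  {F P : Set (EuclideanSpace ℝ (Fin D))}

lemma nconeV_subset_orthogonal_vectorSpan_inf (hFP : F ⊆ P) :
    nconeV V F P ⊆ ((vectorSpan ℝ F)ᗮ ⊓ V : Submodule ℝ _) := by
  rintro u ⟨huV, hu⟩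
  refine ⟨mem_orthogonal_vectorSpan_iff.2 fun p hp q hq => ?_, huV⟩
  exact le_antisymm (hu q hq p (hFP hp)) (hu p hp q (hFP hq))

lemma mem_nconeV_of_eq_setOf {c : EuclideanSpace ℝ (Fin D)} (hcV : c ∈ V)
    (hF : F = {x ∈ P | ∀ q ∈ P, ⟪c, q⟫ ≤ ⟪c, x⟫}) : c ∈ nconeV V F P :=
  ⟨hcV, fun _ hp => (hF.subset hp).2⟩

lemma orthogonal_vectorSpan_inf_le_span_nconeV {S : Finset (EuclideanSpace ℝ (Fin D))}
    {c : EuclideanSpace ℝ (Fin D)} (hcV : c ∈ V)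
    (hF : F = {x ∈ convexHull ℝ ↑S | ∀ q ∈ convexHull ℝ ↑S, ⟪c, q⟫ ≤ ⟪c, x⟫})
    (hFne : F.Nonempty) :
    (vectorSpan ℝ F)ᗮ ⊓ V ≤ Submodule.span ℝ (nconeV V F (convexHull ℝ ↑S)) := by
  rintro w ⟨hwL, hwV⟩
  obtain ⟨p₀, hp₀⟩ := hFne
  have hcF : ∀ p ∈ F, ⟪c, p⟫ = ⟪c, p₀⟫ := fun p hp =>
    le_antisymm ((hF.subset hp₀).2 p (hF.subset hp).1) ((hF.subset hp).2 p₀ (hF.subset hp₀).1)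
  have hwF := mem_orthogonal_vectorSpan_iff.1 hwL
  obtain ⟨ε, hε, hmax⟩ := exists_pos_forall_mem_convexHull_inner_add_smul_le (p := p₀) (w := w)
    (fun s hs => (hF.subset hp₀).2 s (subset_convexHull ℝ _ hs)) fun s hs hcs => by
      refine hwF s ?_ p₀ hp₀
      rw [hF]
      exact ⟨subset_convexHull ℝ _ hs, fun q hq => hcs ▸ (hF.subset hp₀).2 q hq⟩
  have hperturb : c + ε • w ∈ nconeV V F (convexHull ℝ ↑S) := by
    refine ⟨V.add_mem hcV (V.smul_mem ε hwV), fun p hp q hq => ?_⟩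
    refine (hmax q hq).trans_eq ?_
    simp only [inner_add_left, real_inner_smul_left, hcF p hp, hwF p hp p₀ hp₀]
  have hw : w = ε⁻¹ • ((c + ε • w) - c) := by
    rw [add_sub_cancel_left, inv_smul_smul₀ hε.ne']
  rw [hw]
  exact Submodule.smul_mem _ _ <| Submodule.sub_mem _ (Submodule.subset_span hperturb)
    (Submodule.subset_span (mem_nconeV_of_eq_setOf hcV hF))

end NormalCone

/-- The linear span of the normal cone `ncone_V(F,P)` equals the orthogonal complement
(inside `V`) of the direction space `L` of the affine span of `F`; in particular its
dimension is `dim V − dim F`. -/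
theorem ncone_spans_orthogonal_complement {D : ℕ}
    (V : Submodule ℝ (EuclideanSpace ℝ (Fin D))) (y : EuclideanSpace ℝ (Fin D))
    (P : Set (EuclideanSpace ℝ (Fin D))) (hP : IsPolytope P)
    (hPV : ∀ x ∈ P, x - y ∈ V)
    (F : Set (EuclideanSpace ℝ (Fin D))) (hF : IsFaceOf F P) :
    Submodule.span ℝ (nconeV V F P) = (vectorSpan ℝ F)ᗮ ⊓ V ∧
    Module.finrank ℝ (Submodule.span ℝ (nconeV V F P)) =
      Module.finrank ℝ V - Module.finrank ℝ (vectorSpan ℝ F) := by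
  obtain ⟨S, -, rfl⟩ := hP
  obtain ⟨hFne, c, hFc⟩ := hF
  obtain ⟨c', hc'V, hc'⟩ := exists_mem_setOf_forall_inner_le_eq hPV c
  have hFc' := hFc.trans hc'.symm
  have hFP : F ⊆ convexHull ℝ ↑S := fun x hx => (hFc.subset hx).1
  have hspan : Submodule.span ℝ (nconeV V F (convexHull ℝ ↑S)) = (vectorSpan ℝ F)ᗮ ⊓ V :=
    le_antisymm (Submodule.span_le.2 (nconeV_subset_orthogonal_vectorSpan_inf hFP))
      (orthogonal_vectorSpan_inf_le_span_nconeV hc'V hFc' hFne)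
  refine ⟨hspan, ?_⟩
  have hdim := Submodule.finrank_add_inf_finrank_orthogonal
    (vectorSpan_le_of_forall_sub_mem fun x hx => hPV x (hFP hx))
  rw [hspan]
  omega
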